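/- For every edge-labeled tree T, the heterogeneous search number of T is at least lb(T) := Σ_{i=1}^{k} max{ sn(H) : H is an area of T with c(H) = i }. -/

import Mathlib

namespace GS

/-- A move of a (heterogeneous) edge-search strategy with `k` searchers. -/
inductive Move (V : Type) (k : ℕ) where
  | place (s : Fin k) (v : V)
  | remove (s : Fin k)
  | slide (s : Fin k) (u v : V)

/-- A (heterogeneous) edge-search strategy: a sequence of moves (only the first
`len` moves are relevant) together with a fixed color assignment to searchers. -/
structure Strategy (V : Type) (k : ℕ) where
  len : ℕ
  moves : ℕ → Move V k
  colS : Fin k → ℕ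

variable {V : Type} {k : ℕ}

/-- Position of each searcher after `t` moves (`none` = not on the graph). -/
def Strategy.pos (S : Strategy V k) : ℕ → Fin k → Option V
  | 0, _ => none
  | t+1, s =>
    match S.moves t with
    | Move.place s' v => if s = s' then some v else S.pos t s
    | Move.remove s' => if s = s' then none else S.pos t s
    | Move.slide s' _ v => if s = s' then some v else S.pos t s

/-- Vertices occupied by searchers after `t` moves. -/
def Strategy.occupied (S : Strategy V k) (t : ℕ) : Set V :=
  {v | ∃ s, S.pos t s = some v}

/-- The `t`-th move slides a searcher along the edge `e`. -/
def Strategy.sweeps (S : Strategy V k) (t : ℕ) (e : Sym2 V) : Prop :=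
  ∃ s u v, S.moves t = Move.slide s u v ∧ e = s(u, v)

/-- An edge `e` is exposed to recontamination: there is a searcher-free walk from an
endpoint of `e` to an endpoint of a contaminated edge. -/
def exposedEdge (G : SimpleGraph V) (occ : Set V) (C : Set (Sym2 V)) (e : Sym2 V) : Prop :=
  ∃ u w : V, u ∈ e ∧ (∃ f ∈ G.edgeSet, f ∉ C ∧ w ∈ f) ∧
    ∃ p : G.Walk u w, ∀ x ∈ p.support, x ∉ occ

/-- The set of clean edges after `t` moves. -/
def Strategy.clean (S : Strategy V k) (G : SimpleGraph V) : ℕ → Set (Sym2 V)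
  | 0 => ∅
  | t+1 =>
    {e | e ∈ (Strategy.clean S G t ∪ {e' | e' ∈ G.edgeSet ∧ S.sweeps t e'}) ∧
      ¬ exposedEdge G (S.occupied (t+1))
          (Strategy.clean S G t ∪ {e' | e' ∈ G.edgeSet ∧ S.sweeps t e'}) e}

/-- Validity of a heterogeneous strategy: a searcher may be placed only on a vertex
incident to an edge of its own color, and may slide only along an edge of its own
color, starting from the vertex it occupies. -/
structure Strategy.Valid (S : Strategy V k) (G : SimpleGraph V) (c : Sym2 V → ℕ) : Prop where
  place_ok : ∀ t < S.len, ∀ s v, S.moves t = Move.place s v →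
    S.pos t s = none ∧ ∃ w, G.Adj v w ∧ c s(v, w) = S.colS s
  slide_ok : ∀ t < S.len, ∀ s u v, S.moves t = Move.slide s u v →
    G.Adj u v ∧ c s(u, v) = S.colS s ∧ S.pos t s = some u

/-- The strategy cleans the whole graph. -/
def Strategy.CleansAll (S : Strategy V k) (G : SimpleGraph V) : Prop :=
  S.clean G S.len = G.edgeSet

/-- Monotone strategy: no recontamination ever occurs. -/
def Strategy.IsMonotone (S : Strategy V k) (G : SimpleGraph V) : Prop :=
  ∀ t < S.len, S.clean G t ⊆ S.clean G (t+1)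

/-- Number of unit recontaminations of a strategy. -/
noncomputable def Strategy.recont (S : Strategy V k) (G : SimpleGraph V) : ℕ :=
  ∑ t ∈ Finset.range S.len, ((S.clean G t) \ (S.clean G (t+1))).ncard

/-- Number of searchers of color `i`. -/
def Strategy.ncolor (S : Strategy V k) (i : ℕ) : ℕ :=
  (Finset.univ.filter fun s : Fin k => S.colS s = i).card

/-- Heterogeneous search number. -/
noncomputable def hsn (G : SimpleGraph V) (c : Sym2 V → ℕ) : ℕ :=
  sInf {k | ∃ S : Strategy V k, S.Valid G c ∧ S.CleansAll G}

/-- Monotone heterogeneous search number. -/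
noncomputable def mhsn (G : SimpleGraph V) (c : Sym2 V → ℕ) : ℕ :=
  sInf {k | ∃ S : Strategy V k, S.Valid G c ∧ S.IsMonotone G ∧ S.CleansAll G}

/-- Classical edge search number: heterogeneous search with a single color. -/
noncomputable def sn (G : SimpleGraph V) : ℕ := hsn G (fun _ => 0)

/-- A junction: a vertex incident to two edges of different colors. -/
def IsJunction (G : SimpleGraph V) (c : Sym2 V → ℕ) (v : V) : Prop :=
  ∃ e ∈ G.edgeSet, ∃ f ∈ G.edgeSet, v ∈ e ∧ v ∈ f ∧ c e ≠ c f

/-- Any two distinct edges of `H` are joined by a junction-free path within `H`. -/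
def AreaProp (G : SimpleGraph V) (c : Sym2 V → ℕ) (H : Set (Sym2 V)) : Prop :=
  H ⊆ G.edgeSet ∧ ∀ e ∈ H, ∀ f ∈ H, e ≠ f → ∃ u w : V, u ∈ e ∧ w ∈ f ∧
    ∃ p : (SimpleGraph.fromEdgeSet H).Walk u w, ∀ x ∈ p.support, ¬ IsJunction G c x

/-- An area: a maximal nonempty set of edges with the junction-free connectivity property. -/
def IsArea (G : SimpleGraph V) (c : Sym2 V → ℕ) (H : Set (Sym2 V)) : Prop :=
  H.Nonempty ∧ AreaProp G c H ∧ ∀ H', AreaProp G c H' → H ⊆ H' → H' = H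

/-- Vertices spanned by a set of edges. -/
def vertsOf (H : Set (Sym2 V)) : Set V := {v | ∃ e ∈ H, v ∈ e}

/-- The lower bound `lb`: sum over colors of the maximal classical search number
of an area of that color. -/
noncomputable def lb (G : SimpleGraph V) (c : Sym2 V → ℕ) (K : ℕ) : ℕ :=
  ∑ i ∈ Finset.range K,
    sSup {q | ∃ H : Set (Sym2 V), IsArea G c H ∧ (∀ e ∈ H, c e = i) ∧
      q = sn (SimpleGraph.fromEdgeSet H)}

/-- A set of edges is edge-connected. -/
def EdgeConnectedSet (H : Set (Sym2 V)) : Prop :=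
  ∀ e ∈ H, ∀ f ∈ H, ∃ u w : V, u ∈ e ∧ w ∈ f ∧
    Nonempty ((SimpleGraph.fromEdgeSet H).Walk u w)

/-- Connected strategy: the set of clean edges is connected after every move. -/
def Strategy.IsConnectedStrat (S : Strategy V k) (G : SimpleGraph V) : Prop :=
  ∀ t ≤ S.len, EdgeConnectedSet (S.clean G t)

/-- Connected heterogeneous search number. -/
noncomputable def hcsn (G : SimpleGraph V) (c : Sym2 V → ℕ) : ℕ :=
  sInf {k | ∃ S : Strategy V k, S.Valid G c ∧ S.IsConnectedStrat G ∧ S.CleansAll G}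

/-- First move after which the edge `e` is clean. -/
noncomputable def firstClean (S : Strategy V k) (G : SimpleGraph V) (e : Sym2 V) : ℕ :=
  sInf {t | e ∈ S.clean G t}

/-- All searchers are on vertices of `A` after move `t`. -/
def allOn (S : Strategy V k) (t : ℕ) (A : Set V) : Prop :=
  ∀ s : Fin k, ∃ v ∈ A, S.pos t s = some v

/-- First move with all searchers on `A`. -/
noncomputable def tfirst (S : Strategy V k) (A : Set V) : ℕ :=
  sInf {t | t ≤ S.len ∧ allOn S t A}

/-- Last move with all searchers on `A`. -/
noncomputable def tlast (S : Strategy V k) (A : Set V) : ℕ :=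
  sSup {t | t ≤ S.len ∧ allOn S t A}


section Test
variable {V : Type} {k : ℕ}

lemma pos_congr {S₁ S₂ : Strategy V k} : ∀ {t : ℕ}, (∀ u < t, S₁.moves u = S₂.moves u) →
    S₁.pos t = S₂.pos t
  | 0, _ => rfl
  | t+1, h => by
    funext s
    have ih := pos_congr (S₁ := S₁) (S₂ := S₂) (t := t) (fun u hu => h u (Nat.lt_succ_of_lt hu))
    simp only [Strategy.pos, h t (Nat.lt_succ_self t), ih]

lemma sweeps_congr {S₁ S₂ : Strategy V k} {t : ℕ} (h : S₁.moves t = S₂.moves t) :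
    S₁.sweeps t = S₂.sweeps t := by
  funext e; simp only [Strategy.sweeps, h]

lemma occupied_congr {S₁ S₂ : Strategy V k} {t : ℕ} (h : ∀ u < t, S₁.moves u = S₂.moves u) :
    S₁.occupied t = S₂.occupied t := by
  simp only [Strategy.occupied, pos_congr h]

lemma clean_congr {S₁ S₂ : Strategy V k} (G : SimpleGraph V) :
    ∀ {t : ℕ}, (∀ u < t, S₁.moves u = S₂.moves u) → S₁.clean G t = S₂.clean G t
  | 0, _ => rfl
  | t+1, h => by
    have ih := clean_congr (S₁ := S₁) (S₂ := S₂) G (t := t) (fun u hu => h u (Nat.lt_succ_of_lt hu))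
    simp only [Strategy.clean, ih, sweeps_congr (h t (Nat.lt_succ_self t)),
      occupied_congr (t := t+1) h]

lemma clean_subset_edgeSet (S : Strategy V k) (G : SimpleGraph V) :
    ∀ t, S.clean G t ⊆ G.edgeSet
  | 0 => by simp [Strategy.clean]
  | t+1 => by
    intro e he
    rcases he.1 with h | h
    · exact clean_subset_edgeSet S G t h
    · exact h.1

lemma mem_clean_succ {S : Strategy V k} {G : SimpleGraph V} {t : ℕ} {e : Sym2 V} :
    e ∈ S.clean G (t+1) ↔
      e ∈ (S.clean G t ∪ {e' | e' ∈ G.edgeSet ∧ S.sweeps t e'}) ∧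
      ¬ exposedEdge G (S.occupied (t+1))
          (S.clean G t ∪ {e' | e' ∈ G.edgeSet ∧ S.sweeps t e'}) e := Iff.rfl

end Test
section Aux2
variable {V : Type} {k : ℕ}

/-- Which searcher a move acts on. -/
def Move.actor : Move V k → Fin k
  | Move.place s _ => s
  | Move.remove s => s
  | Move.slide s _ _ => s

lemma pos_succ_untouched {S : Strategy V k} {t : ℕ} {s : Fin k}
    (h : (S.moves t).actor ≠ s) : S.pos (t+1) s = S.pos t s := by
  rcases hm : S.moves t with ⟨s', v⟩ | s' | ⟨s', u, v⟩ <;>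
    simp_all [Strategy.pos, Move.actor, hm] <;>
    · intro h'; exact absurd h'.symm (by simpa [hm, Move.actor] using h)

lemma pos_succ_place {S : Strategy V k} {t : ℕ} {s : Fin k} {v : V}
    (h : S.moves t = Move.place s v) : S.pos (t+1) s = some v := by
  simp [Strategy.pos, h]

lemma pos_succ_remove {S : Strategy V k} {t : ℕ} {s : Fin k}
    (h : S.moves t = Move.remove s) : S.pos (t+1) s = none := by
  simp [Strategy.pos, h]

lemma pos_succ_slide {S : Strategy V k} {t : ℕ} {s : Fin k} {u v : V}
    (h : S.moves t = Move.slide s u v) : S.pos (t+1) s = some v := by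
  simp [Strategy.pos, h]

lemma pos_stable {S : Strategy V k} {s : Fin k} {t₁ : ℕ} : ∀ {t₂ : ℕ}, t₁ ≤ t₂ →
    (∀ u, t₁ ≤ u → u < t₂ → (S.moves u).actor ≠ s) → S.pos t₂ s = S.pos t₁ s := by
  intro t₂
  induction t₂ with
  | zero => intro h _; rw [Nat.le_zero.mp h]
  | succ n ih =>
    intro h hunt
    rcases Nat.lt_or_ge t₁ (n+1) with hlt | hge
    · have h1 : t₁ ≤ n := Nat.lt_succ_iff.mp hlt
      rw [pos_succ_untouched (hunt n h1 (Nat.lt_succ_self n))]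
      exact ih h1 (fun u hu hu' => hunt u hu (Nat.lt_succ_of_lt hu'))
    · rw [Nat.le_antisymm h hge]

end Aux2
section Exists
variable {V : Type}

/-- The "flood" strategy: guards on every endpoint, then sweep each edge. -/
noncomputable def bigStrat (c : Sym2 V → ℕ) (m : ℕ) (hm : 0 < m)
    (edge : Fin m → Sym2 V) : Strategy V (3*m) where
  len := 4*m
  moves := fun t =>
    if h : t < m then Move.place ⟨t, by omega⟩ (Quot.out (edge ⟨t, h⟩)).1
    else if h2 : t < 2*m then Move.place ⟨t, by omega⟩ (Quot.out (edge ⟨t - m, by omega⟩)).2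
    else if h3 : t < 4*m then
      (if (t - 2*m) % 2 = 0
       then Move.place ⟨2*m + (t - 2*m)/2, by omega⟩ (Quot.out (edge ⟨(t-2*m)/2, by omega⟩)).1
       else Move.slide ⟨2*m + (t - 2*m)/2, by omega⟩ (Quot.out (edge ⟨(t-2*m)/2, by omega⟩)).1
              (Quot.out (edge ⟨(t-2*m)/2, by omega⟩)).2)
    else Move.remove ⟨0, by omega⟩
  colS := fun s => c (edge ⟨s % m, Nat.mod_lt _ hm⟩)

lemma sym2_out_mk (e : Sym2 V) : s((Quot.out e).1, (Quot.out e).2) = e := by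
  exact Quot.out_eq e

variable (c : Sym2 V → ℕ) {m : ℕ} (hm : 0 < m) (edge : Fin m → Sym2 V)

lemma big_actor (t : ℕ) : ((bigStrat c m hm edge).moves t).actor.val =
    if t < 2*m then t else if t < 4*m then 2*m + (t-2*m)/2 else 0 := by
  simp only [bigStrat]
  split_ifs with h1 h2 h3 h4 <;> simp_all [Move.actor] <;> omega

lemma big_no_sweep {t : ℕ} (h : ¬ ((2*m ≤ t ∧ t < 4*m) ∧ (t - 2*m) % 2 = 1)) (e : Sym2 V) :
    ¬ (bigStrat c m hm edge).sweeps t e := by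
  rintro ⟨s, u, v, hmv, rfl⟩
  simp only [bigStrat] at hmv
  split_ifs at hmv with h1 h2 h3 h4 <;> simp_all
  all_goals omega

lemma big_sweep_eq {t : ℕ} (h2m : 2*m ≤ t) (h4m : t < 4*m) (hodd : (t - 2*m) % 2 = 1)
    {e : Sym2 V} (hs : (bigStrat c m hm edge).sweeps t e) :
    e = edge ⟨(t-2*m)/2, by omega⟩ ∧
    (bigStrat c m hm edge).moves t = Move.slide ⟨2*m + (t - 2*m)/2, by omega⟩
      (Quot.out (edge ⟨(t-2*m)/2, by omega⟩)).1 (Quot.out (edge ⟨(t-2*m)/2, by omega⟩)).2 := by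
  have hmv : (bigStrat c m hm edge).moves t = Move.slide ⟨2*m + (t - 2*m)/2, by omega⟩
      (Quot.out (edge ⟨(t-2*m)/2, by omega⟩)).1 (Quot.out (edge ⟨(t-2*m)/2, by omega⟩)).2 := by
    simp only [bigStrat]
    rw [dif_neg (by omega), dif_neg (by omega), dif_pos h4m, if_neg (by omega)]
  refine ⟨?_, hmv⟩
  rcases hs with ⟨s, u, v, hmv', rfl⟩
  rw [hmv] at hmv'
  cases hmv'
  exact sym2_out_mk _
end Exists
section Exists2
variable {V : Type} (c : Sym2 V → ℕ) {m : ℕ} (hm : 0 < m) (edge : Fin m → Sym2 V)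

lemma big_pos_guard1 {j t : ℕ} (hj : j < m) (hjt : j < t) (ht : t ≤ 4*m) :
    (bigStrat c m hm edge).pos t ⟨j, by omega⟩ = some (Quot.out (edge ⟨j, hj⟩)).1 := by
  have hmv : (bigStrat c m hm edge).moves j = Move.place ⟨j, by omega⟩ (Quot.out (edge ⟨j, hj⟩)).1 := by
    simp only [bigStrat]; rw [dif_pos hj]
  have h1 : (bigStrat c m hm edge).pos (j+1) ⟨j, by omega⟩ = some (Quot.out (edge ⟨j, hj⟩)).1 :=
    pos_succ_place hmv
  rw [pos_stable (Nat.succ_le_of_lt hjt) ?_, h1]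
  intro u hu hu' hactor
  have := big_actor c hm edge u
  rw [hactor] at this
  simp at this
  split_ifs at this <;> omega

lemma big_pos_guard2 {j t : ℕ} (hj : j < m) (hjt : m + j < t) (ht : t ≤ 4*m) :
    (bigStrat c m hm edge).pos t ⟨m + j, by omega⟩ = some (Quot.out (edge ⟨j, hj⟩)).2 := by
  have hmv : (bigStrat c m hm edge).moves (m+j) =
      Move.place ⟨m + j, by omega⟩ (Quot.out (edge ⟨j, hj⟩)).2 := by
    simp only [bigStrat]
    rw [dif_neg (by omega), dif_pos (by omega)]
    simp only [Nat.add_sub_cancel_left]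
  have h1 : (bigStrat c m hm edge).pos (m+j+1) ⟨m+j, by omega⟩ = some (Quot.out (edge ⟨j, hj⟩)).2 :=
    pos_succ_place hmv
  rw [pos_stable (Nat.succ_le_of_lt hjt) ?_, h1]
  intro u hu hu' hactor
  have := big_actor c hm edge u
  rw [hactor] at this
  simp at this
  split_ifs at this <;> omega

lemma big_occupied {t : ℕ} (h2m : 2*m ≤ t) (ht : t ≤ 4*m) {x : V} {j : Fin m}
    (hx : x ∈ edge j) : x ∈ (bigStrat c m hm edge).occupied t := by
  rw [← sym2_out_mk (edge j), Sym2.mem_iff] at hx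
  rcases hx with rfl | rfl
  · exact ⟨⟨j.1, by omega⟩, big_pos_guard1 c hm edge j.2 (by omega) ht⟩
  · exact ⟨⟨m + j.1, by omega⟩, big_pos_guard2 c hm edge j.2 (by omega) ht⟩

end Exists2
section Exists3
variable {V : Type} (G : SimpleGraph V) (c : Sym2 V → ℕ) {m : ℕ} (hm : 0 < m)
  (edge : Fin m → Sym2 V)

lemma big_clean_empty : ∀ t ≤ 2*m, (bigStrat c m hm edge).clean G t = ∅ := by
  intro t
  induction t with
  | zero => intro _; rfl
  | succ n ih =>
    intro hn
    ext e
    simp only [Set.mem_empty_iff_false, iff_false]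
    intro he
    rcases he.1 with h | h
    · rw [ih (by omega)] at h; exact h
    · exact big_no_sweep c hm edge (by omega) e h.2

lemma big_clean_grow (hedge : ∀ j, edge j ∈ G.edgeSet)
    (hsurj : ∀ e ∈ G.edgeSet, ∃ j, edge j = e) :
    ∀ r ≤ 2*m, ∀ j : Fin m, 2*j.1+2 ≤ r → edge j ∈ (bigStrat c m hm edge).clean G (2*m+r) := by
  intro r
  induction r with
  | zero => intro _ j hj; omega
  | succ n ih =>
    intro hn j hj
    have hnexp : ∀ e ∈ G.edgeSet,
        ¬ exposedEdge G ((bigStrat c m hm edge).occupied (2*m+n+1)) ((bigStrat c m hm edge).clean G (2*m+n) ∪ {e' | e' ∈ G.edgeSet ∧ (bigStrat c m hm edge).sweeps (2*m+n) e'}) e := by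
      rintro e he ⟨u, w, hu, _, p, hp⟩
      obtain ⟨j', hj'⟩ := hsurj e he
      exact hp u p.start_mem_support
        (big_occupied c hm edge (h2m := by omega) (ht := by omega) (hj'.symm ▸ hu))
    rcases Nat.lt_or_ge (2*j.1+2) (n+1) with hlt | hge
    · have hin := ih (by omega) j (by omega)
      have : (2*m + (n+1)) = (2*m+n) + 1 := by omega
      rw [this, mem_clean_succ]
      exact ⟨Or.inl hin, hnexp _ (hedge j)⟩
    · -- 2*j+2 = n+1
      have hodd : (2*m+n - 2*m) % 2 = 1 := by omega
      have hdiv : (2*m+n - 2*m) / 2 = j.1 := by omega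
      have hmv : (bigStrat c m hm edge).moves (2*m+n) =
          Move.slide ⟨2*m + j.1, by omega⟩ (Quot.out (edge j)).1 (Quot.out (edge j)).2 := by
        simp only [bigStrat]
        rw [dif_neg (by omega), dif_neg (by omega), dif_pos (by omega), if_neg (by omega)]
        have h9 : 2*m+n-2*m = 2*j.1+1 := by omega
        have h10 : (2*j.1+1)/2 = j.1 := by omega
        simp only [h9, h10, Fin.eta]
      have hsw : (bigStrat c m hm edge).sweeps (2*m+n) (edge j) :=
        ⟨_, _, _, hmv, (sym2_out_mk _).symm⟩
      have : (2*m + (n+1)) = (2*m+n) + 1 := by omega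
      rw [this, mem_clean_succ]
      exact ⟨Or.inr ⟨hedge j, hsw⟩, hnexp _ (hedge j)⟩

end Exists3
section Exists4
variable {V : Type} (G : SimpleGraph V) (c : Sym2 V → ℕ) {m : ℕ} (hm : 0 < m)
  (edge : Fin m → Sym2 V)

lemma big_pos_none {t : ℕ} {s : Fin (3*m)}
    (h : ∀ u < t, ((bigStrat c m hm edge).moves u).actor ≠ s) :
    (bigStrat c m hm edge).pos t s = none := by
  have := pos_stable (S := bigStrat c m hm edge) (s := s) (t₁ := 0) (t₂ := t) (Nat.zero_le t)
    (fun u _ hu' => h u hu')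
  rw [this]; rfl

lemma big_mod_eq {j : ℕ} (hj : j < m) : (2*m+j) % m = j := by
  rw [show 2*m+j = m*2+j by ring, Nat.mul_add_mod]
  exact Nat.mod_eq_of_lt hj

lemma big_valid (hedge : ∀ j, edge j ∈ G.edgeSet) : (bigStrat c m hm edge).Valid G c := by
  have hadj : ∀ j : Fin m, G.Adj (Quot.out (edge j)).1 (Quot.out (edge j)).2 := by
    intro j
    rw [← SimpleGraph.mem_edgeSet, sym2_out_mk]
    exact hedge j
  have hact : ∀ u s, ((bigStrat c m hm edge).moves u).actor = s →
      s.val = if u < 2*m then u else if u < 4*m then 2*m+(u-2*m)/2 else 0 := by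
    intro u s hs
    have := big_actor c hm edge u
    rw [hs] at this
    exact this
  constructor
  · -- place_ok
    intro t ht s v hmv
    simp only [bigStrat] at ht
    simp only [bigStrat] at hmv
    split_ifs at hmv with h1 h2 h3
    · -- t < m, guard1
      cases hmv
      constructor
      · apply big_pos_none
        intro u hu hac
        have := hact u _ hac
        simp only [Fin.val_mk] at this
        split_ifs at this <;> omega
      · refine ⟨(Quot.out (edge ⟨t, h1⟩)).2, hadj ⟨t, h1⟩, ?_⟩
        rw [sym2_out_mk]
        simp only [bigStrat, Fin.val_mk]
        congr 2
        exact Fin.ext (by simp [Nat.mod_eq_of_lt (show t < m by omega)])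
    · -- guard2
      cases hmv
      constructor
      · apply big_pos_none
        intro u hu hac
        have := hact u _ hac
        simp only [Fin.val_mk] at this
        split_ifs at this <;> omega
      · refine ⟨(Quot.out (edge ⟨t - m, by omega⟩)).1, (hadj ⟨t - m, by omega⟩).symm, ?_⟩
        rw [Sym2.eq_swap, sym2_out_mk]
        simp only [bigStrat, Fin.val_mk]
        congr 2
        refine Fin.ext ?_
        simp only [Fin.val_mk]
        rw [Nat.mod_eq_sub_mod (by omega), Nat.mod_eq_of_lt (by omega)]
    · -- sweeper place
      cases hmv
      constructor
      · apply big_pos_none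
        intro u hu hac
        have := hact u _ hac
        simp only [Fin.val_mk] at this
        split_ifs at this <;> omega
      · refine ⟨(Quot.out (edge ⟨(t-2*m)/2, by omega⟩)).2, hadj ⟨(t-2*m)/2, by omega⟩, ?_⟩
        rw [sym2_out_mk]
        simp only [bigStrat, Fin.val_mk]
        congr 2
        refine Fin.ext ?_
        simp only [Fin.val_mk]
        rw [big_mod_eq (by omega)]
  · -- slide_ok
    intro t ht s u v hmv
    simp only [bigStrat] at ht
    simp only [bigStrat] at hmv
    split_ifs at hmv with h1 h2 h3
    all_goals try exact Move.noConfusion hmv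
    cases hmv
    refine ⟨hadj _, ?_, ?_⟩
    · rw [sym2_out_mk]
      simp only [bigStrat, Fin.val_mk]
      congr 2
      refine Fin.ext ?_
      simp only [Fin.val_mk]
      rw [big_mod_eq (by omega)]
    · have hmv' : (bigStrat c m hm edge).moves (t-1) =
          Move.place ⟨2*m + (t-2*m)/2, by omega⟩ (Quot.out (edge ⟨(t-2*m)/2, by omega⟩)).1 := by
        simp only [bigStrat]
        rw [dif_neg (by omega), dif_neg (by omega), dif_pos (by omega), if_pos (by omega)]
        have h9 : t-1-2*m = t-2*m-1 := by omega
        have h10 : (t-2*m-1)/2 = (t-2*m)/2 := by omega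
        simp only [h9, h10]
      have := pos_succ_place hmv'
      rw [show t-1+1 = t by omega] at this
      exact this

lemma exists_big_strategy {V : Type} [Fintype V] (G : SimpleGraph V) (c : Sym2 V → ℕ)
    (hne : G.edgeSet.Nonempty) :
    ∃ k₀, ∃ S : Strategy V k₀, S.Valid G c ∧ S.CleansAll G := by
  classical
  set E := G.edgeSet.toFinite.toFinset with hE
  have hmpos : 0 < E.card := Finset.card_pos.mpr (by
    obtain ⟨e, he⟩ := hne
    exact ⟨e, (Set.Finite.mem_toFinset _).2 he⟩)
  set edge : Fin E.card → Sym2 V := fun j => (E.equivFin.symm j : Sym2 V) with hedgedef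
  have hedge : ∀ j, edge j ∈ G.edgeSet := fun j =>
    (Set.Finite.mem_toFinset _).1 (E.equivFin.symm j).2
  have hsurj : ∀ e ∈ G.edgeSet, ∃ j, edge j = e := by
    intro e he
    refine ⟨E.equivFin ⟨e, (Set.Finite.mem_toFinset _).2 he⟩, ?_⟩
    simp [hedgedef]
  refine ⟨3*E.card, bigStrat c E.card hmpos edge, big_valid G c hmpos edge hedge, ?_⟩
  have hlen : (bigStrat c E.card hmpos edge).len = 2*E.card + 2*E.card := by
    simp only [bigStrat]; ring
  unfold Strategy.CleansAll
  rw [hlen]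
  apply Set.Subset.antisymm (clean_subset_edgeSet _ G _)
  intro e he
  obtain ⟨j, hj⟩ := hsurj e he
  rw [← hj]
  exact big_clean_grow G c hmpos edge hedge hsurj (2*E.card) (le_refl _) j (by omega)

end Exists4
section Area
variable {V : Type} [DecidableEq V] {G : SimpleGraph V} {c : Sym2 V → ℕ} {H : Set (Sym2 V)}

lemma mem_sym2_eq {e : Sym2 V} {u v : V} (hu : u ∈ e) (hv : v ∈ e) (hne : u ≠ v) :
    e = s(u, v) := by
  obtain ⟨a, rfl⟩ := Sym2.mem_iff_exists.1 hu
  rcases Sym2.mem_iff.1 hv with h | h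
  · exact absurd h.symm hne
  · rw [h]

lemma walk_support_mem_vertsOf {u w : V} (hu : u ∈ vertsOf H)
    (p : (SimpleGraph.fromEdgeSet H).Walk u w) : ∀ x ∈ p.support, x ∈ vertsOf H := by
  induction p with
  | nil => intro x hx; rw [SimpleGraph.Walk.support_nil, List.mem_singleton] at hx; rwa [hx]
  | @cons a b w h p ih =>
    intro x hx
    rw [SimpleGraph.Walk.support_cons, List.mem_cons] at hx
    rcases hx with rfl | hx
    · exact hu
    · exact ih ⟨s(a,b), ((SimpleGraph.fromEdgeSet_adj H).1 h).1, Sym2.mem_mk_right a b⟩ x hx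

lemma lift_walk (hHE : H ⊆ G.edgeSet) {u w : V} (p : (SimpleGraph.fromEdgeSet H).Walk u w) :
    ∃ q : G.Walk u w, q.support = p.support ∧ q.edges = p.edges := by
  induction p with
  | nil => exact ⟨SimpleGraph.Walk.nil, rfl, rfl⟩
  | @cons a b w h p ih =>
    obtain ⟨q, hq1, hq2⟩ := ih
    have hadj : G.Adj a b := by
      rw [← SimpleGraph.mem_edgeSet]
      exact hHE ((SimpleGraph.fromEdgeSet_adj H).1 h).1
    exact ⟨SimpleGraph.Walk.cons hadj q, by simp [hq1], by simp [hq2]⟩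

lemma junction_unique_edge (hT : G.IsTree) (hArea : IsArea G c H) {x : V}
    (hx : IsJunction G c x) : ∀ e1 ∈ H, ∀ e2 ∈ H, x ∈ e1 → x ∈ e2 → e1 = e2 := by
  intro e1 he1 e2 he2 hx1 hx2
  by_contra hne
  have hHE : H ⊆ G.edgeSet := hArea.2.1.1
  obtain ⟨u', w', hu', hw', p, hjf⟩ := hArea.2.1.2 e1 he1 e2 he2 hne
  have hxu' : x ≠ u' := fun h => hjf x (h ▸ p.start_mem_support) hx
  have hxw' : x ≠ w' := fun h => hjf x (h ▸ p.end_mem_support) hx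
  have he1x : e1 = s(x, u') := mem_sym2_eq hx1 hu' (fun h => hxu' h)
  have he2x : e2 = s(x, w') := mem_sym2_eq hx2 hw' (fun h => hxw' h)
  have hxa : G.Adj x u' := by rw [← SimpleGraph.mem_edgeSet, ← he1x]; exact hHE he1
  have hxb : G.Adj x w' := by rw [← SimpleGraph.mem_edgeSet, ← he2x]; exact hHE he2
  have hab : u' ≠ w' := fun h => hne (by rw [he1x, he2x, h])
  have hxp : x ∉ p.support := fun hmem => hjf x hmem hx
  obtain ⟨q, hq1, -⟩ := lift_walk hHE p
  have hxq : x ∉ q.bypass.support := fun hmem => hxp (hq1 ▸ q.support_bypass_subset hmem)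
  set P2 : G.Walk u' w' :=
    SimpleGraph.Walk.cons hxa.symm (SimpleGraph.Walk.cons hxb SimpleGraph.Walk.nil) with hP2def
  have hP2 : P2.IsPath := by
    rw [SimpleGraph.Walk.isPath_def, hP2def]
    simp
    exact ⟨⟨Ne.symm hxu', hab⟩, hxw'⟩
  obtain ⟨-, huniq⟩ := SimpleGraph.isTree_iff_existsUnique_path.1 hT
  obtain ⟨P, -, hP⟩ := huniq u' w'
  have h1 : q.bypass = P2 := (hP q.bypass q.bypass_isPath).trans (hP P2 hP2).symm
  apply hxq
  rw [h1, hP2def]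
  simp

lemma not_both_verts (hT : G.IsTree) (hArea : IsArea G c H) {u v : V}
    (hadj : G.Adj u v) (hnH : s(u,v) ∉ H) (hu : u ∈ vertsOf H) : v ∉ vertsOf H := by
  intro hv
  have hHE : H ⊆ G.edgeSet := hArea.2.1.1
  obtain ⟨eu, heu, hueu⟩ := hu
  obtain ⟨ev, hev, hvev⟩ := hv
  -- build a walk from u to v inside fromEdgeSet H
  have hwalk : Nonempty ((SimpleGraph.fromEdgeSet H).Walk u v) := by
    by_cases heq : eu = ev
    · subst heq
      have : eu = s(u, v) := mem_sym2_eq hueu hvev hadj.ne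
      exact absurd (this ▸ heu) hnH
    · obtain ⟨u', w', hu', hw', p, -⟩ := hArea.2.1.2 eu heu ev hev heq
      have w1 : (SimpleGraph.fromEdgeSet H).Walk u u' := by
        by_cases h : u = u'
        · exact h ▸ SimpleGraph.Walk.nil
        · have : eu = s(u, u') := mem_sym2_eq hueu hu' h
          have hne : u ≠ u' := h
          exact SimpleGraph.Walk.cons ((SimpleGraph.fromEdgeSet_adj H).2 ⟨this ▸ heu, hne⟩)
            SimpleGraph.Walk.nil
      have w2 : (SimpleGraph.fromEdgeSet H).Walk w' v := by
        by_cases h : w' = v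
        · exact h ▸ SimpleGraph.Walk.nil
        · have : ev = s(w', v) := mem_sym2_eq hw' hvev h
          exact SimpleGraph.Walk.cons ((SimpleGraph.fromEdgeSet_adj H).2 ⟨this ▸ hev, h⟩)
            SimpleGraph.Walk.nil
      exact ⟨w1.append (p.append w2)⟩
  obtain ⟨q0⟩ := hwalk
  obtain ⟨q, -, hq2⟩ := lift_walk hHE q0
  have hedges : ∀ e ∈ q.edges, e ∈ H := by
    intro e he
    rw [hq2] at he
    have := q0.edges_subset_edgeSet he
    rw [SimpleGraph.edgeSet_fromEdgeSet] at this
    exact this.1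
  -- path from v to u avoiding the edge s(u,v)
  have hP : (q.reverse.bypass).IsPath := SimpleGraph.Walk.bypass_isPath _
  have hePnot : s(u,v) ∉ q.reverse.bypass.edges := by
    intro hmem
    have h1 := q.reverse.edges_bypass_subset hmem
    rw [SimpleGraph.Walk.edges_reverse, List.mem_reverse] at h1
    exact hnH (hedges _ h1)
  have hcyc := SimpleGraph.Path.cons_isCycle ⟨q.reverse.bypass, hP⟩ hadj hePnot
  exact hT.IsAcyclic _ hcyc

lemma interior_two_edges {Gr : SimpleGraph V} {u w : V} (p : Gr.Walk u w) (hp : p.IsPath)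
    {x : V} (hx : x ∈ p.support) (hxu : x ≠ u) (hxw : x ≠ w) :
    ∃ e1 ∈ p.edges, ∃ e2 ∈ p.edges, e1 ≠ e2 ∧ x ∈ e1 ∧ x ∈ e2 := by
  induction p with
  | nil => rw [SimpleGraph.Walk.support_nil, List.mem_singleton] at hx; exact absurd hx hxu
  | @cons a b w h p ih =>
    rw [SimpleGraph.Walk.support_cons, List.mem_cons] at hx
    rcases hx with rfl | hx
    · exact absurd rfl hxu
    by_cases hxb : x = b
    · subst hxb
      cases p with
      | nil => exact absurd rfl hxw
      | @cons b' v2 w2 h2 p2 =>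
        refine ⟨s(a, x), by simp, s(x, v2), by simp, ?_, by simp, by simp⟩
        intro hcon
        rw [Sym2.eq_iff] at hcon
        rcases hcon with ⟨h3, -⟩ | ⟨h3, -⟩
        · exact h.ne h3
        · have hnm := (SimpleGraph.Walk.cons_isPath_iff _ _).1 hp |>.2
          apply hnm
          rw [SimpleGraph.Walk.support_cons, h3]
          exact List.mem_cons_of_mem _ p2.start_mem_support
    · obtain ⟨e1, h1, e2, h2', h3, h4, h5⟩ := ih hp.of_cons hx hxb hxw
      exact ⟨e1, List.mem_cons_of_mem _ h1, e2, List.mem_cons_of_mem _ h2', h3, h4, h5⟩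

end Area
section Transfer
variable {V : Type} [DecidableEq V] {G : SimpleGraph V} {c : Sym2 V → ℕ} {H : Set (Sym2 V)}

open Classical in
lemma transfer (hT : G.IsTree) (hArea : IsArea G c H) (Blk Occ'' : Set V)
    (hblk : ∀ x, x ∈ vertsOf H → x ∈ Blk → x ∈ Occ'' ∨ IsJunction G c x) :
    ∀ n : ℕ, ∀ (u w : V) (e f : Sym2 V), e ∈ H → f ∈ H → e ≠ f → u ∈ e → w ∈ f →
    ∀ q : (SimpleGraph.fromEdgeSet H).Walk u w, q.IsPath →
    (∀ x ∈ q.support, x ∉ Occ'') →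
    2*q.length + (if u ∈ Blk then 0 else 1) ≤ n →
    ∃ u₀ ∈ e, ∃ w₀ ∈ f, ∃ p : G.Walk u₀ w₀, ∀ x ∈ p.support, x ∉ Blk := by
  intro n
  induction n using Nat.strong_induction_on with
  | _ n IH =>
  intro u w e f he hf hef hu hw q hq hocc hn
  have hHE : H ⊆ G.edgeSet := hArea.2.1.1
  by_cases hub : u ∈ Blk
  · have huV : u ∈ vertsOf H := ⟨e, he, hu⟩
    have hj : IsJunction G c u := by
      rcases hblk u huV hub with h | h
      · exact absurd h (hocc u q.start_mem_support)
      · exact h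
    cases q with
    | nil => exact absurd (junction_unique_edge hT hArea hj e he f hf hu hw) hef
    | @cons _ v _ h q' =>
      have hsuv : s(u, v) ∈ H := ((SimpleGraph.fromEdgeSet_adj H).1 h).1
      have heuv : e = s(u, v) :=
        junction_unique_edge hT hArea hj e he (s(u,v)) hsuv hu (Sym2.mem_mk_left u v)
      have hv : v ∈ e := by rw [heuv]; exact Sym2.mem_mk_right u v
      rw [if_pos hub, SimpleGraph.Walk.length_cons] at hn
      have hmlt : 2*q'.length + (if v ∈ Blk then 0 else 1) < n := by
        split_ifs <;> omega
      exact IH _ hmlt v w e f he hf hef hv hw q' hq.of_cons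
        (fun x hx => hocc x (by rw [SimpleGraph.Walk.support_cons]; exact List.mem_cons_of_mem _ hx))
        le_rfl
  · by_cases hwb : w ∈ Blk
    · rw [if_neg hub] at hn
      have hmlt : 2*q.reverse.length + (if w ∈ Blk then 0 else 1) < n := by
        rw [SimpleGraph.Walk.length_reverse, if_pos hwb]; omega
      obtain ⟨w₀, hw₀, u₀, hu₀, p, hp⟩ := IH _ hmlt w u f e hf he hef.symm hw hu q.reverse
        ((SimpleGraph.Walk.isPath_reverse_iff q).2 hq)
        (fun x hx => hocc x (by rwa [SimpleGraph.Walk.support_reverse, List.mem_reverse] at hx))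
        le_rfl
      exact ⟨u₀, hu₀, w₀, hw₀, p.reverse,
        fun x hx => hp x (by rwa [SimpleGraph.Walk.support_reverse, List.mem_reverse] at hx)⟩
    · have hfree : ∀ x ∈ q.support, x ∉ Blk := by
        intro x hxs hxB
        rcases hblk x (walk_support_mem_vertsOf ⟨e, he, hu⟩ q x hxs) hxB with hO | hJ
        · exact hocc x hxs hO
        · by_cases hxu : x = u
          · exact hub (hxu ▸ hxB)
          by_cases hxw : x = w
          · exact hwb (hxw ▸ hxB)
          obtain ⟨e1, h1, e2, h2, hne12, hx1, hx2⟩ := interior_two_edges q hq hxs hxu hxw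
          have he1 : e1 ∈ H := ((SimpleGraph.edgeSet_fromEdgeSet H) ▸ q.edges_subset_edgeSet h1).1
          have he2 : e2 ∈ H := ((SimpleGraph.edgeSet_fromEdgeSet H) ▸ q.edges_subset_edgeSet h2).1
          exact hne12 (junction_unique_edge hT hArea hJ e1 he1 e2 he2 hx1 hx2)
      obtain ⟨p, hp1, -⟩ := lift_walk hHE q
      exact ⟨u, hu, w, hw, p, fun x hx => hfree x (hp1 ▸ hx)⟩

end Transfer
section Sim1
variable {V : Type} {k : ℕ}

/-- Extend a strategy by one move. -/
def extS (S' : Strategy V k) (mv : Move V k) : Strategy V k :=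
  ⟨S'.len + 1, Function.update S'.moves S'.len mv, S'.colS⟩

lemma extS_len (S' : Strategy V k) (mv : Move V k) : (extS S' mv).len = S'.len + 1 := rfl

lemma extS_colS (S' : Strategy V k) (mv : Move V k) : (extS S' mv).colS = S'.colS := rfl

lemma extS_moves_lt {S' : Strategy V k} {mv : Move V k} {u : ℕ} (hu : u < S'.len) :
    (extS S' mv).moves u = S'.moves u := Function.update_of_ne (Nat.ne_of_lt hu) _ _

lemma extS_moves_self (S' : Strategy V k) (mv : Move V k) :
    (extS S' mv).moves S'.len = mv := Function.update_self _ _ _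

lemma extS_pos {S' : Strategy V k} {mv : Move V k} {t : ℕ} (ht : t ≤ S'.len) :
    (extS S' mv).pos t = S'.pos t :=
  pos_congr (fun u hu => extS_moves_lt (lt_of_lt_of_le hu ht))

lemma extS_clean {S' : Strategy V k} {mv : Move V k} (G : SimpleGraph V) {t : ℕ}
    (ht : t ≤ S'.len) : (extS S' mv).clean G t = S'.clean G t :=
  clean_congr G (fun u hu => extS_moves_lt (lt_of_lt_of_le hu ht))

lemma extS_valid {S' : Strategy V k} {mv : Move V k} {Gr : SimpleGraph V} {cc : Sym2 V → ℕ}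
    (hv : S'.Valid Gr cc)
    (hmv : match mv with
      | Move.place s v => S'.pos S'.len s = none ∧ ∃ w, Gr.Adj v w ∧ cc s(v, w) = S'.colS s
      | Move.slide s u v => Gr.Adj u v ∧ cc s(u, v) = S'.colS s ∧ S'.pos S'.len s = some u
      | Move.remove _ => True) : (extS S' mv).Valid Gr cc := by
  constructor
  · intro t ht s v hmv'
    rcases Nat.lt_or_ge t S'.len with h | h
    · rw [extS_moves_lt h] at hmv'
      rw [extS_pos (le_of_lt h)]
      exact hv.place_ok t h s v hmv'
    · have htt : t = S'.len := by
        have := ht; rw [extS_len] at this; omega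
      subst htt
      rw [extS_moves_self] at hmv'
      subst hmv'
      rw [extS_pos le_rfl]
      exact hmv
  · intro t ht s u v hmv'
    rcases Nat.lt_or_ge t S'.len with h | h
    · rw [extS_moves_lt h] at hmv'
      rw [extS_pos (le_of_lt h)]
      exact hv.slide_ok t h s u v hmv'
    · have htt : t = S'.len := by
        have := ht; rw [extS_len] at this; omega
      subst htt
      rw [extS_moves_self] at hmv'
      subst hmv'
      rw [extS_pos le_rfl]
      exact hmv

open Classical in
/-- Restrict an optional position to the vertex set of `H`. -/
noncomputable def restrictO (H : Set (Sym2 V)) (o : Option V) : Option V :=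
  o.bind (fun v => if v ∈ vertsOf H then some v else none)

lemma restrictO_none (H : Set (Sym2 V)) : restrictO H none = none := rfl

open Classical in
lemma restrictO_some_mem {H : Set (Sym2 V)} {x : V} (hx : x ∈ vertsOf H) :
    restrictO H (some x) = some x := by simp [restrictO, hx]

open Classical in
lemma restrictO_some_not {H : Set (Sym2 V)} {x : V} (hx : x ∉ vertsOf H) :
    restrictO H (some x) = none := by simp [restrictO, hx]

lemma pos_succ_place' {S : Strategy V k} {t : ℕ} {s₀ : Fin k} {v : V}
    (h : S.moves t = Move.place s₀ v) (s : Fin k) :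
    S.pos (t+1) s = if s = s₀ then some v else S.pos t s := by
  simp [Strategy.pos, h]

lemma pos_succ_remove' {S : Strategy V k} {t : ℕ} {s₀ : Fin k}
    (h : S.moves t = Move.remove s₀) (s : Fin k) :
    S.pos (t+1) s = if s = s₀ then none else S.pos t s := by
  simp [Strategy.pos, h]

lemma pos_succ_slide' {S : Strategy V k} {t : ℕ} {s₀ : Fin k} {u v : V}
    (h : S.moves t = Move.slide s₀ u v) (s : Fin k) :
    S.pos (t+1) s = if s = s₀ then some v else S.pos t s := by
  simp [Strategy.pos, h]

lemma pos_incident {G : SimpleGraph V} {c : Sym2 V → ℕ} {S : Strategy V k}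
    (hval : S.Valid G c) : ∀ t ≤ S.len, ∀ s x, S.pos t s = some x →
    ∃ e ∈ G.edgeSet, x ∈ e ∧ c e = S.colS s := by
  intro t
  induction t with
  | zero => intro _ s x hx; exact absurd hx (by simp [Strategy.pos])
  | succ n ih =>
    intro hn s x hx
    have hn' : n < S.len := by omega
    rcases hm : S.moves n with ⟨s₀, v⟩ | s₀ | ⟨s₀, u, v⟩
    · rw [pos_succ_place' hm] at hx
      by_cases hss : s = s₀
      · rw [if_pos hss] at hx
        obtain ⟨-, w, hadj, hcw⟩ := hval.place_ok n hn' s₀ v hm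
        replace hx := Option.some.inj hx
        subst hx
        exact ⟨s(v, w), hadj, Sym2.mem_mk_left _ _, hss ▸ hcw⟩
      · rw [if_neg hss] at hx
        exact ih (by omega) s x hx
    · rw [pos_succ_remove' hm] at hx
      by_cases hss : s = s₀
      · rw [if_pos hss] at hx; cases hx
      · rw [if_neg hss] at hx
        exact ih (by omega) s x hx
    · rw [pos_succ_slide' hm] at hx
      by_cases hss : s = s₀
      · rw [if_pos hss] at hx
        obtain ⟨hadj, hcw, -⟩ := hval.slide_ok n hn' s₀ u v hm
        replace hx := Option.some.inj hx
        subst hx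
        exact ⟨s(u, v), hadj, Sym2.mem_mk_right _ _, hss ▸ hcw⟩
      · rw [if_neg hss] at hx
        exact ih (by omega) s x hx

lemma first_clean_sweep {G : SimpleGraph V} {S : Strategy V k} {e : Sym2 V} :
    ∀ {T : ℕ}, e ∈ S.clean G T → ∃ t < T, e ∉ S.clean G t ∧ e ∈ S.clean G (t+1) := by
  intro T
  induction T with
  | zero => intro h; exact absurd h (by simp [Strategy.clean])
  | succ n ih =>
    intro h
    by_cases hn : e ∈ S.clean G n
    · obtain ⟨t, ht, h1, h2⟩ := ih hn
      exact ⟨t, by omega, h1, h2⟩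
    · exact ⟨n, by omega, hn, h⟩

end Sim1

section Sim2
variable {V : Type} [DecidableEq V] {G : SimpleGraph V} {c : Sym2 V → ℕ} {H : Set (Sym2 V)}

lemma exposed_transfer (hT : G.IsTree) (hArea : IsArea G c H)
    (Blk Occ'' : Set V) (C C' : Set (Sym2 V))
    (hblk : ∀ x, x ∈ vertsOf H → x ∈ Blk → x ∈ Occ'' ∨ IsJunction G c x)
    (hCC' : ∀ g, g ∈ C → g ∈ H → g ∈ C') {e : Sym2 V} (he : e ∈ H) (heC' : e ∈ C')
    (hexp : exposedEdge (SimpleGraph.fromEdgeSet H) Occ'' C' e) :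
    exposedEdge G Blk C e := by
  obtain ⟨u, w, hu, ⟨f, hfE, hfC', hwf⟩, p, hp⟩ := hexp
  have hfH : f ∈ H := ((SimpleGraph.edgeSet_fromEdgeSet H) ▸ hfE).1
  have hef : e ≠ f := fun h => hfC' (h ▸ heC')
  have hqsupp : ∀ x ∈ p.bypass.support, x ∉ Occ'' :=
    fun x hx => hp x (p.support_bypass_subset hx)
  obtain ⟨u₀, hu₀, w₀, hw₀, r, hr⟩ := transfer hT hArea Blk Occ'' hblk
    _ u w e f he hfH hef hu hwf p.bypass p.bypass_isPath hqsupp le_rfl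
  have hfG : f ∈ G.edgeSet := hArea.2.1.1 hfH
  have hfC : f ∉ C := fun h => hfC' (hCC' f h hfH)
  exact ⟨u₀, w₀, hu₀, ⟨f, hfG, hfC, hw₀⟩, r, hr⟩

end Sim2
section Sim3
variable {V : Type} [DecidableEq V] {G : SimpleGraph V} {c : Sym2 V → ℕ} {H : Set (Sym2 V)}
  {i : ℕ} {k k' : ℕ}

lemma sim_step (hT : G.IsTree) (hArea : IsArea G c H) (hHc : ∀ e ∈ H, c e = i)
    {S : Strategy V k} (hval : S.Valid G c) {t : ℕ} (ht : t < S.len)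
    (ι : Fin k' → Fin k) (hι1 : ∀ s', S.colS (ι s') = i)
    (hι2 : ∀ s, S.colS s = i → ∃ s', ι s' = s) (hιinj : Function.Injective ι)
    (S' : Strategy V k') (hV : S'.Valid (SimpleGraph.fromEdgeSet H) (fun _ => 0))
    (hcol : ∀ s', S'.colS s' = 0)
    (hpos : ∀ s', S'.pos S'.len s' = restrictO H (S.pos t (ι s')))
    (hcl : S.clean G t ∩ H ⊆ S'.clean (SimpleGraph.fromEdgeSet H) S'.len) :
    ∃ S'' : Strategy V k', S''.Valid (SimpleGraph.fromEdgeSet H) (fun _ => 0) ∧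
      (∀ s', S''.colS s' = 0) ∧
      (∀ s', S''.pos S''.len s' = restrictO H (S.pos (t+1) (ι s'))) ∧
      S.clean G (t+1) ∩ H ⊆ S''.clean (SimpleGraph.fromEdgeSet H) S''.len := by
  classical
  set G' := SimpleGraph.fromEdgeSet H with hG'
  have hVH_adj : ∀ v ∈ vertsOf H, ∃ w, G'.Adj v w := by
    rintro v ⟨e1, he1, hv⟩
    obtain ⟨w1, rfl⟩ := Sym2.mem_iff_exists.1 hv
    have hne : v ≠ w1 := by
      have := hArea.2.1.1 he1
      rw [SimpleGraph.mem_edgeSet] at this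
      exact this.ne
    exact ⟨w1, (SimpleGraph.fromEdgeSet_adj H).2 ⟨he1, hne⟩⟩
  have hinact : (∀ g ∈ H, ¬ S.sweeps t g) →
      (∀ s', restrictO H (S.pos (t+1) (ι s')) = restrictO H (S.pos t (ι s'))) →
      ∃ S'' : Strategy V k', S''.Valid G' (fun _ => 0) ∧ (∀ s', S''.colS s' = 0) ∧
        (∀ s', S''.pos S''.len s' = restrictO H (S.pos (t+1) (ι s'))) ∧
        S.clean G (t+1) ∩ H ⊆ S''.clean G' S''.len := by
    intro hnsw hpos'
    refine ⟨S', hV, hcol, fun s' => (hpos s').trans (hpos' s').symm, ?_⟩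
    rintro e ⟨heC, heH⟩
    rcases heC.1 with h | h
    · exact hcl ⟨h, heH⟩
    · exact absurd h.2 (hnsw e heH)
  have hactive : ∀ mv : Move V k',
      (match mv with
        | Move.place s v => S'.pos S'.len s = none ∧
            ∃ w, G'.Adj v w ∧ (fun _ : Sym2 V => 0) s(v, w) = S'.colS s
        | Move.slide s u v => G'.Adj u v ∧ (fun _ : Sym2 V => 0) s(u, v) = S'.colS s ∧
            S'.pos S'.len s = some u
        | Move.remove _ => True) →
      (∀ s'', (extS S' mv).pos (S'.len+1) s'' = restrictO H (S.pos (t+1) (ι s''))) →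
      (∀ g ∈ H, S.sweeps t g → (extS S' mv).sweeps S'.len g ∧ g ∈ G'.edgeSet) →
      ∃ S'' : Strategy V k', S''.Valid G' (fun _ => 0) ∧ (∀ s', S''.colS s' = 0) ∧
        (∀ s', S''.pos S''.len s' = restrictO H (S.pos (t+1) (ι s'))) ∧
        S.clean G (t+1) ∩ H ⊆ S''.clean G' S''.len := by
    intro mv hvc hpc hsc
    refine ⟨extS S' mv, extS_valid hV hvc, (fun s' => by rw [extS_colS]; exact hcol s'),
      hpc, ?_⟩
    rintro e ⟨heC, heH⟩
    obtain ⟨heCC, hnex⟩ := mem_clean_succ.1 heC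
    have hCC' : ∀ g, g ∈ (S.clean G t ∪ {e' | e' ∈ G.edgeSet ∧ S.sweeps t e'}) → g ∈ H →
        g ∈ ((extS S' mv).clean G' S'.len ∪
          {e' | e' ∈ G'.edgeSet ∧ (extS S' mv).sweeps S'.len e'}) := by
      rintro g (hg | hg) hgH
      · left; rw [extS_clean G' le_rfl]; exact hcl ⟨hg, hgH⟩
      · right; obtain ⟨hsw, hmem⟩ := hsc g hgH hg.2; exact ⟨hmem, hsw⟩
    have hblk : ∀ x, x ∈ vertsOf H → x ∈ S.occupied (t+1) →
        x ∈ (extS S' mv).occupied (S'.len+1) ∨ IsJunction G c x := by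
      rintro x hxV ⟨s1, hs1⟩
      by_cases hc1 : S.colS s1 = i
      · obtain ⟨s'', rfl⟩ := hι2 s1 hc1
        exact Or.inl ⟨s'', by rw [hpc s'', hs1, restrictO_some_mem hxV]⟩
      · right
        obtain ⟨e1, he1G, hxe1, hce1⟩ := pos_incident hval (t+1) (by omega) s1 x hs1
        obtain ⟨e2, he2H, hxe2⟩ := hxV
        refine ⟨e1, he1G, e2, hArea.2.1.1 he2H, hxe1, hxe2, ?_⟩
        rw [hce1, hHc e2 he2H]
        exact hc1
    show e ∈ (extS S' mv).clean G' (S'.len + 1)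
    refine mem_clean_succ.2 ⟨hCC' e heCC heH, fun hexp => hnex ?_⟩
    exact exposed_transfer hT hArea (S.occupied (t+1)) ((extS S' mv).occupied (S'.len+1))
      _ _ hblk hCC' heH (hCC' e heCC heH) hexp
  rcases hm : S.moves t with ⟨s, v⟩ | s | ⟨s, u, v⟩
  · -- place
    by_cases hc : S.colS s = i
    · by_cases hvH : v ∈ vertsOf H
      · obtain ⟨s₀, rfl⟩ := hι2 s hc
        apply hactive (Move.place s₀ v)
        · refine ⟨?_, ?_⟩
          · rw [hpos s₀, (hval.place_ok t ht _ v hm).1, restrictO_none]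
          · obtain ⟨w1, hw1⟩ := hVH_adj v hvH
            exact ⟨w1, hw1, (hcol s₀).symm⟩
        · intro s''
          rw [pos_succ_place' (extS_moves_self S' _) s'', pos_succ_place' hm (ι s'')]
          by_cases hss : s'' = s₀
          · rw [if_pos hss, if_pos (by rw [hss]), restrictO_some_mem hvH]
          · rw [if_neg hss, if_neg (fun h => hss (hιinj h)), extS_pos le_rfl, hpos s'']
        · rintro g hgH ⟨s1, u1, v1, hmv1, -⟩
          rw [hm] at hmv1
          cases hmv1
      · apply hinact
        · rintro g hgH ⟨s1, u1, v1, hmv1, -⟩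
          rw [hm] at hmv1
          cases hmv1
        · intro s'
          rw [pos_succ_place' hm (ι s')]
          by_cases hss : ι s' = s
          · rw [if_pos hss, restrictO_some_not hvH, hss, (hval.place_ok t ht s v hm).1,
              restrictO_none]
          · rw [if_neg hss]
    · apply hinact
      · rintro g hgH ⟨s1, u1, v1, hmv1, -⟩
        rw [hm] at hmv1
        cases hmv1
      · intro s'
        rw [pos_succ_place' hm (ι s'), if_neg (fun h : ι s' = s => hc (h ▸ hι1 s'))]
  · -- remove
    by_cases hc : S.colS s = i
    · obtain ⟨s₀, rfl⟩ := hι2 s hc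
      apply hactive (Move.remove s₀)
      · trivial
      · intro s''
        rw [pos_succ_remove' (extS_moves_self S' _) s'', pos_succ_remove' hm (ι s'')]
        by_cases hss : s'' = s₀
        · rw [if_pos hss, if_pos (by rw [hss]), restrictO_none]
        · rw [if_neg hss, if_neg (fun h => hss (hιinj h)), extS_pos le_rfl, hpos s'']
      · rintro g hgH ⟨s1, u1, v1, hmv1, -⟩
        rw [hm] at hmv1
        cases hmv1
    · apply hinact
      · rintro g hgH ⟨s1, u1, v1, hmv1, -⟩
        rw [hm] at hmv1
        cases hmv1
      · intro s'
        rw [pos_succ_remove' hm (ι s'), if_neg (fun h : ι s' = s => hc (h ▸ hι1 s'))]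
  · -- slide
    obtain ⟨hadj, hcuv, hpu⟩ := hval.slide_ok t ht s u v hm
    by_cases hc : S.colS s = i
    · by_cases hH : s(u,v) ∈ H
      · obtain ⟨s₀, rfl⟩ := hι2 s hc
        have huV : u ∈ vertsOf H := ⟨s(u,v), hH, Sym2.mem_mk_left u v⟩
        have hvV : v ∈ vertsOf H := ⟨s(u,v), hH, Sym2.mem_mk_right u v⟩
        apply hactive (Move.slide s₀ u v)
        · exact ⟨(SimpleGraph.fromEdgeSet_adj H).2 ⟨hH, hadj.ne⟩, (hcol s₀).symm,
            by rw [hpos s₀, hpu, restrictO_some_mem huV]⟩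
        · intro s''
          rw [pos_succ_slide' (extS_moves_self S' _) s'', pos_succ_slide' hm (ι s'')]
          by_cases hss : s'' = s₀
          · rw [if_pos hss, if_pos (by rw [hss]), restrictO_some_mem hvV]
          · rw [if_neg hss, if_neg (fun h => hss (hιinj h)), extS_pos le_rfl, hpos s'']
        · rintro g hgH ⟨s1, u1, v1, hmv1, hg⟩
          rw [hm] at hmv1
          cases hmv1
          refine ⟨⟨s₀, u, v, extS_moves_self S' _, hg⟩, ?_⟩
          rw [hg, hG', SimpleGraph.edgeSet_fromEdgeSet]
          exact ⟨hH, fun hd => hadj.ne (Sym2.mk_isDiag_iff.1 hd)⟩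
      · by_cases huV : u ∈ vertsOf H
        · have hvV : v ∉ vertsOf H := not_both_verts hT hArea hadj hH huV
          obtain ⟨s₀, rfl⟩ := hι2 s hc
          apply hactive (Move.remove s₀)
          · trivial
          · intro s''
            rw [pos_succ_remove' (extS_moves_self S' _) s'', pos_succ_slide' hm (ι s'')]
            by_cases hss : s'' = s₀
            · rw [if_pos hss, if_pos (by rw [hss]), restrictO_some_not hvV]
            · rw [if_neg hss, if_neg (fun h => hss (hιinj h)), extS_pos le_rfl, hpos s'']
          · rintro g hgH ⟨s1, u1, v1, hmv1, hg⟩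
            rw [hm] at hmv1
            cases hmv1
            exact absurd (hg ▸ hgH) hH
        · by_cases hvV : v ∈ vertsOf H
          · obtain ⟨s₀, rfl⟩ := hι2 s hc
            apply hactive (Move.place s₀ v)
            · refine ⟨?_, ?_⟩
              · rw [hpos s₀, hpu, restrictO_some_not huV]
              · obtain ⟨w1, hw1⟩ := hVH_adj v hvV
                exact ⟨w1, hw1, (hcol s₀).symm⟩
            · intro s''
              rw [pos_succ_place' (extS_moves_self S' _) s'', pos_succ_slide' hm (ι s'')]
              by_cases hss : s'' = s₀
              · rw [if_pos hss, if_pos (by rw [hss]), restrictO_some_mem hvV]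
              · rw [if_neg hss, if_neg (fun h => hss (hιinj h)), extS_pos le_rfl, hpos s'']
            · rintro g hgH ⟨s1, u1, v1, hmv1, hg⟩
              rw [hm] at hmv1
              cases hmv1
              exact absurd (hg ▸ hgH) hH
          · apply hinact
            · rintro g hgH ⟨s1, u1, v1, hmv1, hg⟩
              rw [hm] at hmv1
              cases hmv1
              exact absurd (hg ▸ hgH) hH
            · intro s'
              rw [pos_succ_slide' hm (ι s')]
              by_cases hss : ι s' = s
              · rw [if_pos hss, restrictO_some_not hvV, hss, hpu, restrictO_some_not huV]
              · rw [if_neg hss]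
    · apply hinact
      · rintro g hgH ⟨s1, u1, v1, hmv1, hg⟩
        rw [hm] at hmv1
        cases hmv1
        have hgi : c g = i := hHc g hgH
        rw [hg] at hgi
        exact hc (hcuv.symm.trans hgi)
      · intro s'
        rw [pos_succ_slide' hm (ι s'), if_neg (fun h : ι s' = s => hc (h ▸ hι1 s'))]

end Sim3
section Final
variable {V : Type} [DecidableEq V] {G : SimpleGraph V} {c : Sym2 V → ℕ} {H : Set (Sym2 V)}

lemma area_bound (hT : G.IsTree) (hArea : IsArea G c H) {i : ℕ}
    (hHc : ∀ e ∈ H, c e = i) {k : ℕ} {S : Strategy V k} (hval : S.Valid G c)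
    (hcln : S.CleansAll G) :
    sn (SimpleGraph.fromEdgeSet H) ≤ S.ncolor i := by
  classical
  set F := (Finset.univ.filter fun s : Fin k => S.colS s = i) with hF
  set ι : Fin F.card → Fin k := fun s' => (F.equivFin.symm s' : Fin k) with hιdef
  have hι1 : ∀ s', S.colS (ι s') = i := fun s' =>
    (Finset.mem_filter.1 (F.equivFin.symm s').2).2
  have hι2 : ∀ s, S.colS s = i → ∃ s', ι s' = s := fun s hs =>
    ⟨F.equivFin ⟨s, Finset.mem_filter.2 ⟨Finset.mem_univ s, hs⟩⟩, by simp [hιdef]⟩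
  have hιinj : Function.Injective ι :=
    Subtype.val_injective.comp F.equivFin.symm.injective
  obtain ⟨e₀, he₀⟩ := hArea.1
  have he₀C : e₀ ∈ S.clean G S.len := by
    have := hcln
    unfold Strategy.CleansAll at this
    rw [this]
    exact hArea.2.1.1 he₀
  obtain ⟨t₀, ht₀, hnc, hcc⟩ := first_clean_sweep he₀C
  have hsw : S.sweeps t₀ e₀ := by
    rcases (mem_clean_succ.1 hcc).1 with h | h
    · exact absurd h hnc
    · exact h.2
  obtain ⟨s1, u1, v1, hmv1, hg1⟩ := hsw
  have hs1 : S.colS s1 = i := by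
    obtain ⟨-, hcuv, -⟩ := hval.slide_ok t₀ ht₀ s1 u1 v1 hmv1
    have h1 : c e₀ = i := hHc e₀ he₀
    rw [hg1] at h1
    exact hcuv.symm.trans h1
  have hk' : 0 < F.card :=
    Finset.card_pos.2 ⟨s1, Finset.mem_filter.2 ⟨Finset.mem_univ _, hs1⟩⟩
  have main : ∀ t ≤ S.len, ∃ S' : Strategy V F.card,
      S'.Valid (SimpleGraph.fromEdgeSet H) (fun _ => 0) ∧ (∀ s', S'.colS s' = 0) ∧
      (∀ s', S'.pos S'.len s' = restrictO H (S.pos t (ι s'))) ∧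
      S.clean G t ∩ H ⊆ S'.clean (SimpleGraph.fromEdgeSet H) S'.len := by
    intro t
    induction t with
    | zero =>
      intro _
      refine ⟨⟨0, fun _ => Move.remove ⟨0, hk'⟩, fun _ => 0⟩, ?_, fun _ => rfl, ?_, ?_⟩
      · constructor <;> (intro t' ht'; exact absurd ht' (Nat.not_lt_zero t'))
      · intro s'; rfl
      · rintro e ⟨he, -⟩; exact absurd he (by simp [Strategy.clean])
    | succ n ih =>
      intro hn
      obtain ⟨S', hV, hcol, hpos, hcl⟩ := ih (by omega)
      exact sim_step hT hArea hHc hval (by omega) ι hι1 hι2 hιinj S' hV hcol hpos hcl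
  obtain ⟨S', hV, hcol, hpos, hcl⟩ := main S.len le_rfl
  have hall : S'.CleansAll (SimpleGraph.fromEdgeSet H) := by
    unfold Strategy.CleansAll
    apply Set.Subset.antisymm (clean_subset_edgeSet _ _ _)
    intro e he
    rw [SimpleGraph.edgeSet_fromEdgeSet] at he
    apply hcl
    refine ⟨?_, he.1⟩
    have := hcln
    unfold Strategy.CleansAll at this
    rw [this]
    exact hArea.2.1.1 he.1
  have hle : sn (SimpleGraph.fromEdgeSet H) ≤ F.card := Nat.sInf_le ⟨S', hV, hall⟩
  have : S.ncolor i = F.card := by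
    unfold Strategy.ncolor
    rw [hF]
  omega

end Final
theorem hsn_ge_lb' {V : Type} [Fintype V] [DecidableEq V]
    (G : SimpleGraph V) (hT : G.IsTree) (c : Sym2 V → ℕ)
    (K : ℕ) (hK : ∀ e ∈ G.edgeSet, c e < K) :
    lb G c K ≤ hsn G c := by
  by_cases hE : G.edgeSet.Nonempty
  · obtain ⟨k₀, S₀, hv₀, hc₀⟩ := exists_big_strategy G c hE
    have hA : {k | ∃ S : Strategy V k, S.Valid G c ∧ S.CleansAll G}.Nonempty :=
      ⟨k₀, S₀, hv₀, hc₀⟩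
    obtain ⟨S, hval, hcln⟩ := Nat.sInf_mem hA
    show lb G c K ≤ sInf {k | ∃ S : Strategy V k, S.Valid G c ∧ S.CleansAll G}
    unfold lb
    have step1 : ∀ i ∈ Finset.range K,
        sSup {q | ∃ H : Set (Sym2 V), IsArea G c H ∧ (∀ e ∈ H, c e = i) ∧
          q = sn (SimpleGraph.fromEdgeSet H)} ≤ S.ncolor i := by
      intro i _
      rcases Set.eq_empty_or_nonempty {q | ∃ H : Set (Sym2 V), IsArea G c H ∧
          (∀ e ∈ H, c e = i) ∧ q = sn (SimpleGraph.fromEdgeSet H)} with hemp | hne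
      · rw [hemp, csSup_empty]
        exact Nat.zero_le _
      · refine csSup_le hne ?_
        rintro q ⟨H, hAr, hcol, rfl⟩
        exact area_bound hT hAr hcol hval hcln
    refine le_trans (Finset.sum_le_sum step1) ?_
    -- sum of fiber cards is at most the total number of searchers
    have h1 : (Finset.univ.filter
          (fun s : Fin (sInf {k | ∃ S : Strategy V k, S.Valid G c ∧ S.CleansAll G}) =>
            S.colS s ∈ Finset.range K)).card
        = ∑ i ∈ Finset.range K, ((Finset.univ.filter
            (fun s => S.colS s ∈ Finset.range K)).filter (fun s => S.colS s = i)).card :=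
      Finset.card_eq_sum_card_fiberwise (fun x hx => (Finset.mem_filter.1 hx).2)
    have h2 : ∀ i ∈ Finset.range K,
        ((Finset.univ.filter (fun s => S.colS s ∈ Finset.range K)).filter
          (fun s => S.colS s = i))
        = Finset.univ.filter (fun s => S.colS s = i) := by
      intro i hi
      ext s
      simp only [Finset.mem_filter, Finset.mem_univ, true_and, Finset.mem_range]
      constructor
      · rintro ⟨-, h⟩; exact h
      · intro h; exact ⟨by rw [h]; exact Finset.mem_range.1 hi, h⟩
    have h3 : ∑ i ∈ Finset.range K, S.ncolor i
        = (Finset.univ.filter (fun s => S.colS s ∈ Finset.range K)).card := by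
      rw [h1]
      refine Finset.sum_congr rfl ?_
      intro i hi
      rw [h2 i hi]
      rfl
    rw [h3]
    calc (Finset.univ.filter (fun s => S.colS s ∈ Finset.range K)).card
        ≤ (Finset.univ : Finset (Fin _)).card := Finset.card_filter_le _ _
      _ = _ := by rw [Finset.card_univ, Fintype.card_fin]
  · have hlb : lb G c K = 0 := by
      unfold lb
      apply Finset.sum_eq_zero
      intro i _
      have hemp : {q | ∃ H : Set (Sym2 V), IsArea G c H ∧ (∀ e ∈ H, c e = i) ∧
          q = sn (SimpleGraph.fromEdgeSet H)} = ∅ := by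
        rw [Set.eq_empty_iff_forall_notMem]
        rintro q ⟨H, hAr, -, -⟩
        obtain ⟨e, he⟩ := hAr.1
        exact hE ⟨e, hAr.2.1.1 he⟩
      rw [hemp, csSup_empty]
      rfl
    rw [hlb]
    exact Nat.zero_le _

/-- For every edge-labeled tree `T` (with colors `< K`),
the heterogeneous search number of `T` is at least
`lb(T) = Σ_i max { sn(H) : H an area of T of color i }`. -/
theorem hsn_ge_lb {V : Type} [Fintype V] [DecidableEq V]
    (G : SimpleGraph V) (hT : G.IsTree) (c : Sym2 V → ℕ)
    (K : ℕ) (hK : ∀ e ∈ G.edgeSet, c e < K) :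
    lb G c K ≤ hsn G c := by
  exact hsn_ge_lb' G hT c K hK

end GS
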